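/- Let N ≥ 1, let λ be a σ-finite Borel measure on ℝ^N, let M > 0 and let r : ℝ^N → (0, ∞) be measurable with r(x) ≤ M for all x, and let β ≥ 2 be such that for every x ∈ ℝ^N, sup{ r(x+v) : |v| ≤ 2M } ≤ (β−1)·r(x). Let α ≥ 0 and define g_1(x) = ∫_{ℝ^N} |x−y|^α · 1{|x−y| ≤ r(x)+r(y)} dλ(y). Then for every x ∈ ℝ^N, g_1(x) ≤ β^α · r(x)^α · λ(B̄(x, β·r(x))), and consequently ∫_{ℝ^N} g_1(x)^2 dλ(x) ≤ β^{2α} · ∫_{ℝ^N} r(x)^{2α} · λ(B̄(x, β·r(x)))^2 dλ(x), both inequalities understood in [0,∞]. -/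
import Mathlib


open Real MeasureTheory ENNReal

/-- Pointwise and `L_2` bounds on the first chaos kernel of the power length functional:
`g_1(x) = ∫ |x-y|^α 1{|x-y| ≤ r(x)+r(y)} dλ(y) ≤ β^α r(x)^α λ(B̄(x, β r(x)))` for every `x`,
and consequently `∫ g_1² dλ ≤ β^{2α} ∫ r(x)^{2α} λ(B̄(x, β r(x)))² dλ(x)`. -/
theorem stmt_8 (N : ℕ) (hN : 1 ≤ N)
    (lam : Measure (EuclideanSpace ℝ (Fin N))) [SigmaFinite lam]
    (M : ℝ) (hM : 0 < M)
    (r : EuclideanSpace ℝ (Fin N) → ℝ) (hrmeas : Measurable r)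
    (hrpos : ∀ x, 0 < r x) (hrM : ∀ x, r x ≤ M)
    (β : ℝ) (hβ : 2 ≤ β)
    (hreg : ∀ x v, ‖v‖ ≤ 2 * M → r (x + v) ≤ (β - 1) * r x)
    (α : ℝ) (hα : 0 ≤ α)
    (g₁ : EuclideanSpace ℝ (Fin N) → ℝ≥0∞)
    (hg₁ : ∀ x, g₁ x = ∫⁻ y, ENNReal.ofReal (‖x - y‖ ^ α *
        (if ‖x - y‖ ≤ r x + r y then (1 : ℝ) else 0)) ∂lam) :
    (∀ x, g₁ x ≤ ENNReal.ofReal (β ^ α * r x ^ α) * lam (Metric.closedBall x (β * r x))) ∧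
    (∫⁻ x, (g₁ x) ^ 2 ∂lam) ≤
      ENNReal.ofReal (β ^ (2 * α)) *
        ∫⁻ x, ENNReal.ofReal (r x ^ (2 * α)) * (lam (Metric.closedBall x (β * r x))) ^ 2
          ∂lam := by
  have hβ0 : (0 : ℝ) ≤ β := by linarith
  have hpt : ∀ x, g₁ x ≤ ENNReal.ofReal (β ^ α * r x ^ α) *
      lam (Metric.closedBall x (β * r x)) := by
    intro x
    rw [hg₁ x]
    have hbd : ∀ y, ENNReal.ofReal (‖x - y‖ ^ α *
        (if ‖x - y‖ ≤ r x + r y then (1 : ℝ) else 0)) ≤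
        (Metric.closedBall x (β * r x)).indicator
          (fun _ => ENNReal.ofReal (β ^ α * r x ^ α)) y := by
      intro y
      by_cases h : ‖x - y‖ ≤ r x + r y
      · have hry : r y ≤ (β - 1) * r x := by
          have := hreg x (y - x) (by
            have : ‖y - x‖ = ‖x - y‖ := norm_sub_rev _ _
            rw [this]
            calc ‖x - y‖ ≤ r x + r y := h
              _ ≤ 2 * M := by have := hrM x; have := hrM y; linarith)
          simpa using this
        have hxy : ‖x - y‖ ≤ β * r x := by nlinarith [hrpos x]
        have hmem : y ∈ Metric.closedBall x (β * r x) := by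
          rw [Metric.mem_closedBall, dist_comm, dist_eq_norm]
          exact hxy
        rw [Set.indicator_of_mem hmem, if_pos h, mul_one]
        refine ENNReal.ofReal_le_ofReal ?_
        calc ‖x - y‖ ^ α ≤ (β * r x) ^ α :=
              Real.rpow_le_rpow (norm_nonneg _) hxy hα
          _ = β ^ α * r x ^ α := Real.mul_rpow hβ0 (hrpos x).le
      · rw [if_neg h, mul_zero]
        simp
    calc (∫⁻ y, ENNReal.ofReal (‖x - y‖ ^ α *
          (if ‖x - y‖ ≤ r x + r y then (1 : ℝ) else 0)) ∂lam)
        ≤ ∫⁻ y, (Metric.closedBall x (β * r x)).indicator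
            (fun _ => ENNReal.ofReal (β ^ α * r x ^ α)) y ∂lam :=
          lintegral_mono hbd
      _ = ENNReal.ofReal (β ^ α * r x ^ α) * lam (Metric.closedBall x (β * r x)) := by
          rw [lintegral_indicator_const Metric.isClosed_closedBall.measurableSet]
  refine ⟨hpt, ?_⟩
  calc (∫⁻ x, (g₁ x) ^ 2 ∂lam)
      ≤ ∫⁻ x, (ENNReal.ofReal (β ^ α * r x ^ α) *
          lam (Metric.closedBall x (β * r x))) ^ 2 ∂lam :=
        lintegral_mono fun x => pow_le_pow_left' (hpt x) 2
    _ = ∫⁻ x, ENNReal.ofReal (β ^ (2 * α)) * (ENNReal.ofReal (r x ^ (2 * α)) *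
          (lam (Metric.closedBall x (β * r x))) ^ 2) ∂lam := by
        refine lintegral_congr fun x => ?_
        have h1 : ((β : ℝ) ^ α * r x ^ α) ^ 2 = β ^ (2 * α) * r x ^ (2 * α) := by
          rw [mul_pow, ← Real.rpow_natCast (β ^ α) 2, ← Real.rpow_natCast (r x ^ α) 2,
            ← Real.rpow_mul hβ0, ← Real.rpow_mul (hrpos x).le]
          norm_num [mul_comm]
        rw [mul_pow, ← ENNReal.ofReal_pow (mul_nonneg (Real.rpow_nonneg hβ0 α) (Real.rpow_nonneg (hrpos x).le α)), h1,
          ENNReal.ofReal_mul (Real.rpow_nonneg hβ0 _), mul_assoc]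
    _ = ENNReal.ofReal (β ^ (2 * α)) *
        ∫⁻ x, ENNReal.ofReal (r x ^ (2 * α)) * (lam (Metric.closedBall x (β * r x))) ^ 2
          ∂lam := lintegral_const_mul' _ _ ENNReal.ofReal_ne_top
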